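/- arXiv:1905.11726 — 4 statements merged into one kernel-verified Lean document; each statement's English description precedes it below -/
import Mathlib

section
/- Let A be a unital C*-algebra with comultiplication Δ, ω an idempotent state, p⊥ the support projection of ω in A** (so ω(p⊥ a p⊥) = ω(a) for all a and ω restricted to p⊥ A** p⊥ is faithful). Then the normal extension Δ̃ of Δ to A** satisfies Δ̃(p)(p⊥ ⊗ p⊥) = 0, equivalently Δ̃(p⊥)(p⊥ ⊗ p⊥) = p⊥ ⊗ p⊥, where p = 1 − p⊥. -/
open scoped ComplexOrder

/-- A state on a unital C*-algebra. -/
def IsState {M : Type*} [CStarAlgebra M] (ω : M →L[ℂ] ℂ) : Prop :=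
  ω 1 = 1 ∧ ∀ a : M, 0 ≤ ω (star a * a)

/-- A positive functional. -/
def IsPositive {M : Type*} [CStarAlgebra M] (μ : M →L[ℂ] ℂ) : Prop :=
  ∀ a : M, 0 ≤ μ (star a * a)

/-- `M` models the bidual `A**`, `TM` models `A** ⊗̄ A**`, `Δ` is the
normal extension `Δ̃` of the coassociative comultiplication (a unital
*-homomorphism), `ω` an idempotent state and `pperp` its support projection
(characterized by `ω(x*x) = 0 ↔ x·pperp = 0`).  The slice maps `Sl μ = (μ ⊗ id)`
and `Sr ν = (id ⊗ ν)` satisfy the listed structural identities (positivity,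
module property, Fubini, separation).  Then `Δ̃(p)(p⊥ ⊗ p⊥) = 0` for `p = 1 − p⊥`,
equivalently `Δ̃(p⊥)(p⊥ ⊗ p⊥) = p⊥ ⊗ p⊥`. -/
theorem support_projection_absorbed_by_comultiplication
    {M TM : Type*} [CStarAlgebra M] [CStarAlgebra TM]
    [PartialOrder M] [StarOrderedRing M] [PartialOrder TM] [StarOrderedRing TM]
    -- simple tensors
    (m : M →ₗ[ℂ] M →ₗ[ℂ] TM)
    (hm_mul : ∀ a b c d : M, m a b * m c d = m (a * c) (b * d))
    (hm_star : ∀ a b : M, star (m a b) = m (star a) (star b))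
    (hm_one : m 1 1 = 1)
    -- the (normal extension of the) comultiplication: a unital *-homomorphism
    (Δ : M →L[ℂ] TM)
    (hΔ1 : Δ 1 = 1) (hΔmul : ∀ a b : M, Δ (a * b) = Δ a * Δ b)
    (hΔstar : ∀ a : M, Δ (star a) = star (Δ a))
    -- the idempotent state and its support projection
    (ω : M →L[ℂ] ℂ) (hω : IsState ω)
    (pperp : M) (hp_star : star pperp = pperp) (hp_idem : pperp * pperp = pperp)
    (hsupp : ∀ x : M, ω (star x * x) = 0 ↔ x * pperp = 0)
    -- slice maps and their structural properties
    (Sl Sr : (M →L[ℂ] ℂ) → TM →L[ℂ] M)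
    (hSl_pos : ∀ μ : M →L[ℂ] ℂ, IsPositive μ → ∀ t : TM, 0 ≤ t → 0 ≤ Sl μ t)
    (hSr_pos : ∀ ν : M →L[ℂ] ℂ, IsPositive ν → ∀ t : TM, 0 ≤ t → 0 ≤ Sr ν t)
    (hSl_mod : ∀ (μ : M →L[ℂ] ℂ) (x z : M) (t : TM),
        Sl μ (m 1 x * t * m 1 z) = x * Sl μ t * z)
    (hSr_mod : ∀ (ν : M →L[ℂ] ℂ) (x z : M) (t : TM),
        Sr ν (m x 1 * t * m z 1) = x * Sr ν t * z)
    (hFubini : ∀ (μ : M →L[ℂ] ℂ) (t : TM), μ (Sr ω t) = ω (Sl μ t))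
    (hsep : ∀ t : TM, (∀ μ : M →L[ℂ] ℂ, IsPositive μ → Sl μ t = 0) → t = 0)
    -- idempotency of `ω`: `(ω ⊗ ω) ∘ Δ̃ = ω`
    (hidem : ∀ a : M, ω (Sr ω (Δ a)) = ω a) :
    Δ (1 - pperp) * m pperp pperp = 0 ∧
    Δ pperp * m pperp pperp = m pperp pperp := by

  -- notation
  set p : M := 1 - pperp with hp
  have hpmul : p * pperp = 0 := by
    simp [hp, sub_mul, hp_idem]
  have hpstar : star p = p := by
    simp [hp, hp_star]
  have hpidem : p * p = p := by
    simp [hp, mul_sub, sub_mul, hp_idem]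
  -- ω(p) = 0
  have hωp : ω p = 0 := by
    have := (hsupp p).mpr hpmul
    rwa [hpstar, hpidem] at this
  -- key lemma: positive element killed by ω is killed by pperp ⬝ pperp
  have key : ∀ b : M, 0 ≤ b → ω b = 0 → pperp * b * pperp = 0 := by
    intro b hb hωb
    set c := CFC.sqrt b with hc
    have hcsa : star c = c := (IsSelfAdjoint.of_nonneg (CFC.sqrt_nonneg (a := b))).star_eq
    have hcc : star c * c = b := by rw [hcsa]; exact CFC.sqrt_mul_sqrt_self b hb
    have h0 : ω (star c * c) = 0 := by rw [hcc]; exact hωb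
    have hcp : c * pperp = 0 := (hsupp c).mp h0
    have hpc : pperp * c = 0 := by
      have := congrArg star hcp
      simpa [star_mul, hcsa, hp_star] using this
    calc pperp * b * pperp = (pperp * c) * (c * pperp) := by
          rw [← hcc, hcsa]; noncomm_ring
      _ = 0 := by rw [hpc, zero_mul]
  -- q = Δ p is a projection
  set q : TM := Δ p with hq
  have hqstar : star q = q := by rw [hq, ← hΔstar, hpstar]
  have hqidem : q * q = q := by rw [hq, ← hΔmul, hpidem]
  have hqpos : (0:TM) ≤ q := by
    calc (0:TM) ≤ star q * q := star_mul_self_nonneg q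
      _ = q := by rw [hqstar, hqidem]
  -- Sr ω q is positive with ω-value 0
  have hωstate : IsPositive ω := hω.2
  have hb : pperp * Sr ω q * pperp = 0 := by
    refine key _ (hSr_pos ω hωstate q hqpos) ?_
    rw [hq, hidem, hωp]
  -- s = m pp 1 * q * m pp 1
  set s : TM := m pperp 1 * q * m pperp 1 with hs
  have hSrs : Sr ω s = 0 := by
    rw [hs, hSr_mod, hb]
  have hspos : (0:TM) ≤ s := by
    have hstar : star (q * m pperp 1) = m pperp 1 * q := by
      rw [star_mul, hqstar, hm_star, hp_star, star_one]
    calc (0:TM) ≤ star (q * m pperp 1) * (q * m pperp 1) :=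
          star_mul_self_nonneg _
      _ = s := by rw [hstar, hs]; rw [show m pperp 1 * q * (q * m pperp 1)
            = m pperp 1 * (q * q) * m pperp 1 by noncomm_ring, hqidem]
  -- e = m pp pp
  set e : TM := m pperp pperp with he
  have hmm1 : m (1:M) pperp * m pperp 1 = e := by rw [hm_mul]; simp [he]
  have hmm2 : m pperp (1:M) * m 1 pperp = e := by rw [hm_mul]; simp [he]
  have ht : m (1:M) pperp * s * m 1 pperp = e * q * e := by
    rw [hs]
    calc m (1:M) pperp * (m pperp 1 * q * m pperp 1) * m 1 pperp
        = (m (1:M) pperp * m pperp 1) * q * (m pperp (1:M) * m 1 pperp) := by noncomm_ring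
      _ = e * q * e := by rw [hmm1, hmm2]
  -- each positive slice of e*q*e vanishes
  have hslices : ∀ μ : M →L[ℂ] ℂ, IsPositive μ → Sl μ (e * q * e) = 0 := by
    intro μ hμ
    rw [← ht, hSl_mod]
    refine key _ (hSl_pos μ hμ s hspos) ?_
    rw [← hFubini, hSrs, map_zero]
  have heqe : e * q * e = 0 := hsep _ hslices
  have hestar : star e = e := by rw [he, hm_star, hp_star]
  have hqe : q * e = 0 := by
    have : star (q * e) * (q * e) = 0 := by
      rw [star_mul, hestar, hqstar,
        show e * q * (q * e) = e * (q * q) * e by noncomm_ring, hqidem, heqe]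
    exact (CStarRing.star_mul_self_eq_zero_iff _).mp this
  constructor
  · exact hqe
  · have hΔpp : Δ pperp = 1 - q := by
      rw [hq, hp, map_sub, hΔ1, sub_sub_cancel]
    rw [hΔpp, sub_mul, one_mul, hqe, sub_zero]
end

section
/- Let A be a unital C*-algebra, Δ : A → A ⊗ A a coassociative unital *-homomorphism with normal extension Δ̃ to A**, and let p⊥ ∈ A** be a projection satisfying Δ̃(p⊥)(p⊥ ⊗ p⊥) = p⊥ ⊗ p⊥. Define Δ_ω(y) = (p⊥ ⊗ p⊥) Δ̃(y) (p⊥ ⊗ p⊥) for y in the compressed algebra p⊥ A** p⊥. Then Δ_ω is coassociative: (Δ_ω ⊗ id) ∘ Δ_ω = (id ⊗ Δ_ω) ∘ Δ_ω on p⊥ A** p⊥. -/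
/-- coassociativity of the compressed comultiplication.  `M` models
`A**`, `TM` models `A** ⊗̄ A**` (simple tensors `m`), `T3` the triple tensor product
(simple tensors `m3`, partial tensor maps `j : TM ⊗ M → T3` and `j' : M ⊗ TM → T3`),
`D1 = Δ̃ ⊗ id` and `D2 = id ⊗ Δ̃`, with `Δ̃` the normal extension of a coassociative
comultiplication (`D1 ∘ Δ̃ = D2 ∘ Δ̃`).  If the projection `p⊥` satisfies the
absorption property `Δ̃(p⊥)(p⊥ ⊗ p⊥) = p⊥ ⊗ p⊥` (and its adjoint), then the
compressed map `Δ_ω(y) = (p⊥ ⊗ p⊥) Δ̃(y) (p⊥ ⊗ p⊥)` is coassociative on the corner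
`p⊥ A** p⊥`:  `(Δ_ω ⊗ id)(Δ_ω y) = (id ⊗ Δ_ω)(Δ_ω y)` for `y = p⊥ a p⊥`, where
`(Δ_ω ⊗ id)(t) = (p⊥ ⊗ p⊥ ⊗ 1) D1(t) (p⊥ ⊗ p⊥ ⊗ 1)` and
`(id ⊗ Δ_ω)(t) = (1 ⊗ p⊥ ⊗ p⊥) D2(t) (1 ⊗ p⊥ ⊗ p⊥)`. -/
theorem compressed_comultiplication_coassociative
    {M TM T3 : Type*}
    [Ring M] [Algebra ℂ M] [StarRing M]
    [Ring TM] [Algebra ℂ TM] [StarRing TM]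
    [Ring T3] [Algebra ℂ T3] [StarRing T3]
    (m : M →ₗ[ℂ] M →ₗ[ℂ] TM)
    (hm_mul : ∀ a b c d : M, m a b * m c d = m (a * c) (b * d))
    (hm_star : ∀ a b : M, star (m a b) = m (star a) (star b))
    (m3 : M →ₗ[ℂ] M →ₗ[ℂ] M →ₗ[ℂ] T3)
    (j : TM →ₗ[ℂ] M →ₗ[ℂ] T3) (j' : M →ₗ[ℂ] TM →ₗ[ℂ] T3)
    (hj_m : ∀ x y c : M, j (m x y) c = m3 x y c)
    (hj'_m : ∀ x y z : M, j' x (m y z) = m3 x y z)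
    (hj_mul : ∀ (s t : TM) (c d : M), j s c * j t d = j (s * t) (c * d))
    (hj'_mul : ∀ (c d : M) (s t : TM), j' c s * j' d t = j' (c * d) (s * t))
    (Δ : M →ₗ[ℂ] TM)
    (hΔmul : ∀ a b : M, Δ (a * b) = Δ a * Δ b)
    (hΔstar : ∀ a : M, Δ (star a) = star (Δ a))
    (D1 D2 : TM →ₗ[ℂ] T3)
    (hD1m : ∀ a b : M, D1 (m a b) = j (Δ a) b)
    (hD2m : ∀ a b : M, D2 (m a b) = j' a (Δ b))
    (hD1mul : ∀ s t : TM, D1 (s * t) = D1 s * D1 t)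
    (hD2mul : ∀ s t : TM, D2 (s * t) = D2 s * D2 t)
    (hcoassoc : ∀ a : M, D1 (Δ a) = D2 (Δ a))
    (pperp : M) (hp_star : star pperp = pperp) (hp_idem : pperp * pperp = pperp)
    (habs : Δ pperp * m pperp pperp = m pperp pperp)
    (habs' : m pperp pperp * Δ pperp = m pperp pperp) :
    ∀ a : M,
      (j (m pperp pperp) 1) *
          D1 (m pperp pperp * Δ (pperp * a * pperp) * m pperp pperp) *
          (j (m pperp pperp) 1)
        =
      (j' 1 (m pperp pperp)) *
          D2 (m pperp pperp * Δ (pperp * a * pperp) * m pperp pperp) *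
          (j' 1 (m pperp pperp)) := by
  intro a
  set P := m pperp pperp with hP
  have hD1P : D1 P = j (Δ pperp) pperp := hD1m pperp pperp
  have hD2P : D2 P = j' pperp (Δ pperp) := hD2m pperp pperp
  have h1 : j P 1 * D1 P = j P pperp := by
    rw [hD1P, hj_mul, habs', one_mul]
  have h2 : D1 P * j P 1 = j P pperp := by
    rw [hD1P, hj_mul, habs, mul_one]
  have h1' : j' 1 P * D2 P = j' pperp P := by
    rw [hD2P, hj'_mul, habs', one_mul]
  have h2' : D2 P * j' 1 P = j' pperp P := by
    rw [hD2P, hj'_mul, habs, mul_one]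
  have hjj' : j P pperp = j' pperp P := by
    rw [hP, hj_m, hj'_m]
  calc j P 1 * D1 (P * Δ (pperp * a * pperp) * P) * j P 1
      = (j P 1 * D1 P) * D1 (Δ (pperp * a * pperp)) * (D1 P * j P 1) := by
        rw [hD1mul, hD1mul]; noncomm_ring
    _ = j' pperp P * D2 (Δ (pperp * a * pperp)) * j' pperp P := by
        rw [h1, h2, hjj', hcoassoc]
    _ = (j' 1 P * D2 P) * D2 (Δ (pperp * a * pperp)) * (D2 P * j' 1 P) := by
        rw [h1', h2']
    _ = j' 1 P * D2 (P * Δ (pperp * a * pperp) * P) * j' 1 P := by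
        rw [hD2mul, hD2mul]; noncomm_ring
end

section
/- Let A be a unital C*-algebra with coassociative comultiplication Δ and ω an idempotent state with support projection p⊥ ∈ A**. Then for every a ∈ A: p⊥ ((ω ⊗ id)Δ̃(a)) p⊥ = ω(a) p⊥, where Δ̃ is the normal extension of Δ to A**. (Invariance formula: compressing the convolution a ⋆ ω by the support yields a scalar multiple of the support.) -/
open scoped ComplexOrder

/-- invariance formula.  `M` models `A**`, `TM` the tensor square,
`Δ` the (normal extension of the) comultiplication and `S = (ω ⊗ id)` the slice map,
so `a ⋆ ω = S (Δ a)`.  `ω` is an idempotent state (so `ω(S(Δ a)) = ω a`) whose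
convolutions `a ⋆ ω` lie in the multiplicative domain of `ω` (the multiplicative
domain result), and `pperp` is the support projection of `ω`
(`ω(x*x) = 0 ↔ x pperp = 0`).  Then `p⊥ (a ⋆ ω) p⊥ = ω(a) p⊥` for every `a`. -/
theorem compressed_convolution_eq_scalar_support
    {M TM : Type*} [CStarAlgebra M] [CStarAlgebra TM]
    (Δ : M →L[ℂ] TM) (S : TM →L[ℂ] M)
    (ω : M →L[ℂ] ℂ) (hω : IsState ω)
    (pperp : M) (hp_star : star pperp = pperp) (hp_idem : pperp * pperp = pperp)
    (hsupp : ∀ x : M, ω (star x * x) = 0 ↔ x * pperp = 0)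
    -- `ω(a ⋆ ω) = ω(a)` (idempotency of `ω`)
    (hωS : ∀ a : M, ω (S (Δ a)) = ω a)
    -- `a ⋆ ω` lies in the multiplicative domain of `ω`
    (hmd : ∀ a x : M, ω (x * S (Δ a)) = ω x * ω (S (Δ a)) ∧
                      ω (S (Δ a) * x) = ω (S (Δ a)) * ω x) :
    ∀ a : M, pperp * S (Δ a) * pperp = ω a • pperp := by
  intro a
  set b := S (Δ a) with hb
  have hωb : ω b = ω a := hωS a
  have hmul : ω (star b * b) = ω (star b) * ω b := (hmd a (star b)).1
  have hzero : ω (star (b - ω a • 1) * (b - ω a • 1)) = 0 := by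
    have hexp : star (b - ω a • 1) * (b - ω a • 1)
        = star b * b - ω a • star b - (starRingEnd ℂ (ω a)) • b
          + (starRingEnd ℂ (ω a) * ω a) • (1 : M) := by
      simp [star_sub, star_smul, sub_mul, mul_sub, smul_mul_assoc, mul_smul_comm,
        smul_smul, mul_comm, smul_sub, smul_add]
      module
    rw [hexp]
    simp only [map_add, map_sub, map_smul, smul_eq_mul, hmul, hωb, hω.1, mul_one]
    ring
  have hc : (b - ω a • 1) * pperp = 0 := (hsupp _).mp hzero
  have hbp : b * pperp = ω a • pperp := by
    have h := hc
    rw [sub_mul, smul_mul_assoc, one_mul, sub_eq_zero] at h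
    exact h
  rw [mul_assoc, hbp, mul_smul_comm, hp_idem]
end

section
/- Let A be a unital C*-algebra, ω a state on A, and suppose there exists a positive e ∈ A with ω(e) = 1, and the element u := (id ⊗ ω)Δ(e) (i.e., ω ⋆ e) lies in A and lies in the multiplicative domain of ω with ω(u) = 1. Then for every z ∈ A**, z p⊥ = z u p⊥, where p⊥ is the support projection of ω in A**. In particular p⊥ = u p⊥, so p⊥ is a compact projection. -/
open scoped ComplexOrder

/-- `M` a unital C*-algebra (playing the role of `A` inside `A**`),
`ω` a state with support projection `pperp` (`ω(x*x) = 0 ↔ x pperp = 0`), `e ≥ 0`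
with `ω(e) = 1`, and `u = (id ⊗ ω)(Δ e) = ω ⋆ e` (a positive element, `S` being the
slice map) lying in the multiplicative domain of `ω` with `ω(u) = 1`.  Then
`z p⊥ = z u p⊥` for every `z`; in particular `p⊥ = u p⊥`, so `p⊥` is a compact
projection (it is absorbed by the positive element `u`). -/
theorem support_projection_compact_of_convolution
    {M TM : Type*} [CStarAlgebra M] [CStarAlgebra TM]
    [PartialOrder M] [StarOrderedRing M]
    (Δ : M →L[ℂ] TM) (S : TM →L[ℂ] M)
    (ω : M →L[ℂ] ℂ) (hω : IsState ω)
    (pperp : M) (hp_star : star pperp = pperp) (hp_idem : pperp * pperp = pperp)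
    (hsupp : ∀ x : M, ω (star x * x) = 0 ↔ x * pperp = 0)
    (e : M) (he : 0 ≤ e) (hωe : ω e = 1)
    -- `u = ω ⋆ e = (id ⊗ ω)(Δ e)`, positive since `e` is positive
    (hu_pos : 0 ≤ S (Δ e))
    -- `u` lies in the multiplicative domain of `ω`
    (hmd : ∀ a : M, ω (a * S (Δ e)) = ω a * ω (S (Δ e)) ∧
                    ω (S (Δ e) * a) = ω (S (Δ e)) * ω a)
    (hωu : ω (S (Δ e)) = 1) :
    (∀ z : M, z * pperp = z * S (Δ e) * pperp) ∧
    pperp = S (Δ e) * pperp := by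
  have hsu : star (S (Δ e)) = S (Δ e) := IsSelfAdjoint.of_nonneg hu_pos
  have key : ∀ z : M, z * pperp = z * S (Δ e) * pperp := by
    intro z
    have h1 := (hmd (star z * z)).1
    have h2 := (hmd (star z * z)).2
    have h3 := (hmd (S (Δ e) * (star z * z))).1
    rw [hωu, mul_one] at h1 h3
    rw [hωu, one_mul] at h2
    have h0 : ω (star (z - z * S (Δ e)) * (z - z * S (Δ e))) = 0 := by
      have expand : star (z - z * S (Δ e)) * (z - z * S (Δ e))
          = star z * z - star z * z * S (Δ e) - S (Δ e) * (star z * z)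
            + S (Δ e) * (star z * z) * S (Δ e) := by
        simp only [star_sub, star_mul, hsu]
        noncomm_ring
      rw [expand]
      simp only [map_add, map_sub, h1, h3, h2]
      ring
    have := (hsupp (z - z * S (Δ e))).1 h0
    rw [sub_mul, sub_eq_zero] at this
    rw [this]
  refine ⟨key, ?_⟩
  have := key 1
  simpa using this
end
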